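/- For a standard normal random variable Z and reals t > 0, s ≥ 1/t, one has P(Z > t + s) ≤ P(Z > t)/2. -/

import Mathlib

/-!
Translating by `s` turns `P(Z > t + s)` into `∫_{x > t} φ(x + s) dx`, and for `x > t` the density
ratio is `φ(x + s) / φ(x) = exp (-(x s + s² / 2)) ≤ exp (-1) < 1 / 2`, because `x s ≥ t s ≥ 1`.
-/

open MeasureTheory ProbabilityTheory Set Real

lemma setLIntegral_Ioi_add (f : ℝ → ENNReal) (t s : ℝ) :
    ∫⁻ x in Ioi (t + s), f x = ∫⁻ x in Ioi t, f (x + s) := by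
  rw [← (measurePreserving_add_right volume s).setLIntegral_comp_preimage_emb
    (measurableEmbedding_addRight s)]
  simp only [preimage_add_const_Ioi, add_sub_cancel_right]

lemma gaussianPDFReal_add_eq_mul_exp (μ : ℝ) (v : NNReal) (x s : ℝ) :
    gaussianPDFReal μ v (x + s) =
      gaussianPDFReal μ v x * rexp (-((x - μ) * s + s ^ 2 / 2) / v) := by
  rw [gaussianPDFReal, gaussianPDFReal, mul_assoc _ (rexp _), ← exp_add]
  congr 2
  ring

lemma gaussianPDF_add_le_half {x s : ℝ} (hxs : 1 ≤ x * s) :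
    gaussianPDF 0 1 (x + s) ≤ gaussianPDF 0 1 x / 2 := by
  have hexp : rexp (-(x * s + s ^ 2 / 2)) ≤ 1 / 2 :=
    calc rexp (-(x * s + s ^ 2 / 2)) ≤ rexp (-1) := exp_le_exp.mpr (by nlinarith [sq_nonneg s])
      _ ≤ 1 / 2 := exp_neg_one_lt_half.le
  have hreal : gaussianPDFReal 0 1 (x + s) ≤ gaussianPDFReal 0 1 x / 2 := by
    rw [gaussianPDFReal_add_eq_mul_exp, NNReal.coe_one, div_one, sub_zero,
      div_eq_mul_one_div (gaussianPDFReal 0 1 x)]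
    exact mul_le_mul_of_nonneg_left hexp (gaussianPDFReal_nonneg _ _ _)
  calc gaussianPDF 0 1 (x + s) ≤ ENNReal.ofReal (gaussianPDFReal 0 1 x / 2) :=
        ENNReal.ofReal_le_ofReal hreal
    _ = gaussianPDF 0 1 x / 2 := by
        rw [ENNReal.ofReal_div_of_pos two_pos, ENNReal.ofReal_ofNat, gaussianPDF]

theorem stmt_8 (t s : ℝ) (ht : 0 < t) (hs : 1 / t ≤ s) :
    gaussianReal 0 1 (Ioi (t + s)) ≤ gaussianReal 0 1 (Ioi t) / 2 := by
  have hts : 1 ≤ t * s := by rwa [div_le_iff₀ ht, mul_comm] at hs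
  have hs0 : 0 ≤ s := (one_div_pos.mpr ht).le.trans hs
  rw [gaussianReal_apply _ one_ne_zero, gaussianReal_apply _ one_ne_zero, setLIntegral_Ioi_add,
    ENNReal.div_eq_inv_mul, ← lintegral_const_mul' _ _ (by simp)]
  refine setLIntegral_mono' measurableSet_Ioi fun x hx => ?_
  rw [← ENNReal.div_eq_inv_mul]
  exact gaussianPDF_add_le_half (hts.trans (mul_le_mul_of_nonneg_right (le_of_lt hx) hs0))
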